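/- arXiv:1104.0904 — 4 statements merged into one kernel-verified Lean document; each statement's English description precedes it below -/
import Mathlib

section
/- Let R = ℂ[X_1,…,X_k] be a polynomial ring graded with deg X_i > 0 for all i. Let I ⊆ R be a homogeneous ideal and {f_1,…,f_n} a minimal homogeneous generating set of I with deg f_i > 0 for all i. If g ∈ R is homogeneous of positive degree and its image in R/I is a non-zerodivisor, then {f_1,…,f_n,g} is a minimal homogeneous generating set of the ideal I + (g). -/
set_option maxHeartbeats 1000000


open MvPolynomial

/-- Multiplying by a homogeneous polynomial of degree `d` shifts homogeneous
components by `d`. -/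
lemma homogComponent_mul_shift {σ : Type*} (w : σ → ℕ) {p : MvPolynomial σ ℂ} {d : ℕ}
    (hp : p.IsWeightedHomogeneous w d) (q : MvPolynomial σ ℂ) (e : ℕ) :
    weightedHomogeneousComponent w (d + e) (p * q) =
      p * weightedHomogeneousComponent w e q := by
  classical
  conv_lhs => rw [← sum_weightedHomogeneousComponent w q]
  rw [finsum_eq_sum _ (weightedHomogeneousComponent_finsupp q), Finset.mul_sum, map_sum]
  rw [Finset.sum_eq_single e
    (fun m _ hm => (hp.mul (weightedHomogeneousComponent_isWeightedHomogeneous m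
      q)).weightedHomogeneousComponent_ne _ (by omega))
    (fun he => by
      have h0 : weightedHomogeneousComponent w e q = 0 := by
        by_contra h0
        exact he ((weightedHomogeneousComponent_finsupp q).mem_toFinset.2 h0)
      rw [h0, mul_zero, map_zero])]
  exact (hp.mul (weightedHomogeneousComponent_isWeightedHomogeneous e
    q)).weightedHomogeneousComponent_same

/-- The degree-zero component of a multiple of a positive-degree homogeneous
polynomial vanishes. -/
lemma homogComponent_zero_mul {σ : Type*} (w : σ → ℕ) {p : MvPolynomial σ ℂ} {d : ℕ}
    (hd : 0 < d) (hp : p.IsWeightedHomogeneous w d) (q : MvPolynomial σ ℂ) :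
    weightedHomogeneousComponent w 0 (p * q) = 0 := by
  classical
  conv_lhs => rw [← sum_weightedHomogeneousComponent w q]
  rw [finsum_eq_sum _ (weightedHomogeneousComponent_finsupp q), Finset.mul_sum, map_sum]
  apply Finset.sum_eq_zero
  intro m _
  exact (hp.mul (weightedHomogeneousComponent_isWeightedHomogeneous m
    q)).weightedHomogeneousComponent_ne _ (by omega)

/-- Let `R = ℂ[X_1,…,X_k]` be a polynomial ring graded by weights `w i > 0`. If
`f 1, …, f n` is a minimal homogeneous generating set (of positive degrees) of a
homogeneous ideal `I`, and `g` is homogeneous of positive degree whose image in `R/I`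
is a non-zerodivisor, then `{f 1, …, f n, g}` is a minimal homogeneous generating set of
the ideal `I + (g)`. -/
theorem minimal_generators_extend_by_nonzerodivisor
    {k n : ℕ} (w : Fin k → ℕ) (hw : ∀ i, 0 < w i)
    (I : Ideal (MvPolynomial (Fin k) ℂ))
    (f : Fin n → MvPolynomial (Fin k) ℂ)
    (df : Fin n → ℕ) (hdf : ∀ i, 0 < df i)
    (hfhom : ∀ i, (f i).IsWeightedHomogeneous w (df i))
    (hspan : Ideal.span (Set.range f) = I)
    (hmin : ∀ i, f i ∉ Ideal.span (f '' {j | j ≠ i}))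
    (g : MvPolynomial (Fin k) ℂ) (dg : ℕ) (hdg : 0 < dg)
    (hghom : g.IsWeightedHomogeneous w dg)
    (hreg : ∀ r : MvPolynomial (Fin k) ℂ, g * r ∈ I → r ∈ I) :
    Ideal.span (insert g (Set.range f)) = I ⊔ Ideal.span {g} ∧
      g ∉ Ideal.span (Set.range f) ∧
      ∀ i, f i ∉ Ideal.span (insert g (f '' {j | j ≠ i})) := by
  classical
  -- `1 ∉ I` because `I` is generated by positive-degree homogeneous polynomials.
  have hconst : ∀ x ∈ I, constantCoeff x = 0 := by
    intro x hx
    rw [← hspan] at hx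
    have : Ideal.span (Set.range f) ≤ RingHom.ker (constantCoeff (R := ℂ) (σ := Fin k)) := by
      rw [Ideal.span_le]
      rintro _ ⟨i, rfl⟩
      have := (hfhom i).coeff_eq_zero (d := 0) (by
        simp only [map_zero]
        exact (hdf i).ne)
      simpa [RingHom.mem_ker, constantCoeff_eq] using this
    exact this hx
  have hone : (1 : MvPolynomial (Fin k) ℂ) ∉ I := fun h => by
    simpa using hconst 1 h
  refine ⟨?_, ?_, ?_⟩
  · rw [Ideal.span_insert, hspan, sup_comm]
  · rw [hspan]
    intro hg
    exact hone (hreg 1 (by simpa using hg))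
  · intro i hi
    set J := Ideal.span (f '' {j | j ≠ i}) with hJdef
    -- J is a homogeneous ideal
    letI : GradedAlgebra (weightedHomogeneousSubmodule ℂ w) := weightedGradedAlgebra ℂ w
    have hJhom : J.IsHomogeneous (weightedHomogeneousSubmodule ℂ w) := by
      apply Ideal.homogeneous_span
      rintro _ ⟨j, _, rfl⟩
      exact ⟨df j, (mem_weightedHomogeneousSubmodule ℂ w (df j) (f j)).2 (hfhom j)⟩
    have hJcomp : ∀ r ∈ J, ∀ m, weightedHomogeneousComponent w m r ∈ J := by
      intro r hr m
      have := hJhom m hr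
      rwa [← MvPolynomial.decompose'_apply ℂ w r m]
    have hJI : J ≤ I := by
      rw [← hspan, hJdef]
      apply Ideal.span_mono
      rintro _ ⟨j, _, rfl⟩
      exact ⟨j, rfl⟩
    -- write f i = a * g + z with z ∈ J
    obtain ⟨a, z, hz, heq⟩ := Ideal.mem_span_insert.mp hi
    -- then g * a ∈ I, hence a ∈ I
    have hga : g * a ∈ I := by
      have : a * g = f i - z := by rw [heq]; ring
      rw [mul_comm, this]
      exact sub_mem (hspan ▸ Ideal.subset_span ⟨i, rfl⟩) (hJI hz)
    have haI : a ∈ Ideal.span (Set.range f) := hspan ▸ hreg a hga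
    obtain ⟨c, hc⟩ := (Ideal.mem_span_range_iff_exists_fun).mp haI
    -- f i * (1 - c i * g) ∈ J
    have hrest : ∀ j ∈ Finset.univ.erase i, c j * f j * g ∈ J := by
      intro j hj
      have hji : j ≠ i := (Finset.mem_erase.mp hj).1
      exact J.mul_mem_right g (J.mul_mem_left (c j)
        (Ideal.subset_span ⟨j, hji, rfl⟩))
    have expand : f i = c i * f i * g +
        ((∑ j ∈ Finset.univ.erase i, c j * f j * g) + z) := by
      have h1 : (∑ j, c j * f j * g) =
          c i * f i * g + ∑ j ∈ Finset.univ.erase i, c j * f j * g :=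
        (Finset.add_sum_erase _ _ (Finset.mem_univ i)).symm
      calc f i = a * g + z := heq
        _ = (∑ j, c j * f j) * g + z := by rw [hc]
        _ = (∑ j, c j * f j * g) + z := by rw [Finset.sum_mul]
        _ = _ := by rw [h1]; ring
    have key : f i * (1 - c i * g) ∈ J := by
      have hz' : f i * (1 - c i * g) =
          (∑ j ∈ Finset.univ.erase i, c j * f j * g) + z := by
        rw [mul_sub, mul_one]
        nth_rewrite 1 [expand]
        ring
      rw [hz']
      exact add_mem (Ideal.sum_mem J hrest) hz
    -- take the degree-`df i` homogeneous component
    have hcomp : weightedHomogeneousComponent w (df i) (f i * (1 - c i * g)) = f i := by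
      have h1 : weightedHomogeneousComponent w (df i + 0) (f i * (1 - c i * g)) =
          f i * weightedHomogeneousComponent w 0 (1 - c i * g) :=
        homogComponent_mul_shift w (hfhom i) _ 0
      have h2 : weightedHomogeneousComponent w 0 (1 - c i * g) = 1 := by
        have h3 : weightedHomogeneousComponent w 0 (g * c i) = 0 :=
          homogComponent_zero_mul w hdg hghom (c i)
        have h4 : weightedHomogeneousComponent w 0 (1 : MvPolynomial (Fin k) ℂ) = 1 :=
          (isWeightedHomogeneous_one ℂ w).weightedHomogeneousComponent_same
        rw [sub_eq_add_neg, map_add, map_neg, mul_comm (c i) g, h3, h4]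
        simp
      rw [Nat.add_zero] at h1
      rw [h1, h2, mul_one]
    exact hmin i (hcomp ▸ hJcomp _ key (df i))
end

section
/- The fundamental trace identity for 3×3 matrices: for all complex 3×3 matrices A, B, C, D one has tr(A)tr(B)tr(C)tr(D) − [tr(AB)tr(C)tr(D) + tr(AC)tr(B)tr(D) + tr(AD)tr(B)tr(C) + tr(BC)tr(A)tr(D) + tr(BD)tr(A)tr(C) + tr(CD)tr(A)tr(B)] + [tr(AB)tr(CD) + tr(AC)tr(BD) + tr(AD)tr(BC)] + [tr(ABC)tr(D) + tr(ACB)tr(D) + tr(ABD)tr(C) + tr(ADB)tr(C) + tr(ACD)tr(B) + tr(ADC)tr(B) + tr(BCD)tr(A) + tr(BDC)tr(A)] − [tr(ABCD) + tr(ABDC) + tr(ACBD) + tr(ACDB) + tr(ADBC) + tr(ADCB)] = 0. -/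
open Matrix

set_option maxHeartbeats 4000000 in
/-- The fundamental trace identity for `3 × 3` complex matrices:
`Σ_{σ ∈ S₄} sgn(σ) Tr_σ(A,B,C,D) = 0`. -/
theorem fundamental_trace_identity_three_by_three (A B C D : Matrix (Fin 3) (Fin 3) ℂ) :
    A.trace * B.trace * C.trace * D.trace
      - ((A * B).trace * C.trace * D.trace + (A * C).trace * B.trace * D.trace
        + (A * D).trace * B.trace * C.trace + (B * C).trace * A.trace * D.trace
        + (B * D).trace * A.trace * C.trace + (C * D).trace * A.trace * B.trace)
      + ((A * B).trace * (C * D).trace + (A * C).trace * (B * D).trace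
        + (A * D).trace * (B * C).trace)
      + ((A * B * C).trace * D.trace + (A * C * B).trace * D.trace
        + (A * B * D).trace * C.trace + (A * D * B).trace * C.trace
        + (A * C * D).trace * B.trace + (A * D * C).trace * B.trace
        + (B * C * D).trace * A.trace + (B * D * C).trace * A.trace)
      - ((A * B * C * D).trace + (A * B * D * C).trace + (A * C * B * D).trace
        + (A * C * D * B).trace + (A * D * B * C).trace + (A * D * C * B).trace) = 0 := by
  simp only [Matrix.trace, Matrix.diag, Matrix.mul_apply, Fin.sum_univ_three]
  ring
end

section
/- Trace reduction for 2×2 matrices with traceless arguments: for all complex 2×2 matrices x_1, x_2, x_3, X_4 with tr(x_1) = tr(x_2) = tr(x_3) = 0 one has tr(x_1x_2x_3X_4) = (1/2)·( tr(x_1x_2x_3)tr(X_4) + tr(x_1x_2)tr(x_3X_4) + tr(x_1X_4)tr(x_2x_3) − tr(x_2X_4)tr(x_1x_3) ). -/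
open Matrix

/-- Trace reduction for `2 × 2` matrices with traceless arguments: if `x₁, x₂, x₃` are
traceless `2 × 2` complex matrices and `X₄` is any `2 × 2` complex matrix, then
`tr(x₁x₂x₃X₄) = (1/2)(tr(x₁x₂x₃)tr(X₄) + tr(x₁x₂)tr(x₃X₄) + tr(x₁X₄)tr(x₂x₃) − tr(x₂X₄)tr(x₁x₃))`. -/
theorem trace_reduction_two_by_two_traceless (x₁ x₂ x₃ X₄ : Matrix (Fin 2) (Fin 2) ℂ)
    (h₁ : x₁.trace = 0) (h₂ : x₂.trace = 0) (h₃ : x₃.trace = 0) :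
    (x₁ * x₂ * x₃ * X₄).trace =
      (1 / 2 : ℂ) * ((x₁ * x₂ * x₃).trace * X₄.trace + (x₁ * x₂).trace * (x₃ * X₄).trace
        + (x₁ * X₄).trace * (x₂ * x₃).trace - (x₂ * X₄).trace * (x₁ * x₃).trace) := by
  simp only [Matrix.trace_fin_two, Matrix.mul_apply, Fin.sum_univ_two] at *
  have e1 : x₁ 1 1 = -x₁ 0 0 := by linear_combination h₁
  have e2 : x₂ 1 1 = -x₂ 0 0 := by linear_combination h₂
  have e3 : x₃ 1 1 = -x₃ 0 0 := by linear_combination h₃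
  rw [e1, e2, e3]; ring
end

section
/- For all complex 3×3 matrices a, b with tr(a) = tr(b) = 0 one has tr(a²b²) = (1/6)·tr(a²)tr(b²) + (1/3)·tr(ab)² + (1/3)·( tr(a²b²) − tr(abab) ); equivalently, 4·tr(a²b²) + 2·tr(abab) = tr(a²)tr(b²) + 2·tr(ab)². -/
open Matrix

/-- For traceless `3 × 3` complex matrices `a, b`:
`tr(a²b²) = (1/6)tr(a²)tr(b²) + (1/3)tr(ab)² + (1/3)(tr(a²b²) − tr(abab))`;
equivalently, `4 tr(a²b²) + 2 tr(abab) = tr(a²)tr(b²) + 2 tr(ab)²`. -/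
theorem trace_sq_sq_identity_three_by_three (a b : Matrix (Fin 3) (Fin 3) ℂ)
    (ha : a.trace = 0) (hb : b.trace = 0) :
    (a * a * b * b).trace =
        (1 / 6 : ℂ) * (a * a).trace * (b * b).trace + (1 / 3 : ℂ) * (a * b).trace ^ 2
          + (1 / 3 : ℂ) * ((a * a * b * b).trace - (a * b * a * b).trace) ∧
      4 * (a * a * b * b).trace + 2 * (a * b * a * b).trace =
        (a * a).trace * (b * b).trace + 2 * (a * b).trace ^ 2 := by
  simp only [Matrix.trace, Matrix.mul_apply, Fin.sum_univ_three, Matrix.diag] at *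
  have h1 : a 2 2 = -a 0 0 - a 1 1 := by linear_combination ha
  have h2 : b 2 2 = -b 0 0 - b 1 1 := by linear_combination hb
  constructor <;> · rw [h1, h2]; ring
end
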